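/- arXiv:2509.13188 — 5 statements merged into one kernel-verified Lean document; each statement's English description precedes it below -/
import Mathlib

section
/- There exists a constant φ₀ > 0 such that |φ(k,l)| ≥ φ₀ for all (k,l) ∈ ℝ². (First assertion of Proposition A.1: the phase function is uniformly bounded away from zero on ℝ².) -/
open Real Complex

/-- Japanese bracket `⟨k⟩ = √(1+k²)`. -/
noncomputable def jb (k : ℝ) : ℝ := Real.sqrt (1 + k ^ 2)

/-- The Fourier symbol `λ̂(k) = -d k² - i⟨k⟩`. -/
noncomputable def lamHat (d : ℝ) (k : ℝ) : ℂ := -(d * k ^ 2 : ℝ) - Complex.I * (jb k : ℝ)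

/-- The phase function `φ(k,l) = -λ̂(k) + λ̂(k-l) + λ̂(l)`. -/
noncomputable def phase (d : ℝ) (k l : ℝ) : ℂ := -lamHat d k + lamHat d (k - l) + lamHat d l

/-!
The real part of `φ(k,l)` is `2d (k-l) l`, of size at least `2d` once `|k-l|, |l| ≥ 1`.
Otherwise one of `a = k-l`, `b = l`, say `a`, has `|a| ≤ 1`. Since `⟨·⟩` is 1-Lipschitz,
`⟨a+b⟩ ≤ ⟨b⟩ + |a|`, while `⟨a⟩ - |a|` decreases on `[0,1]`, so `⟨a⟩ ≥ √2 - 1 + |a|`.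
Hence `-Im φ = ⟨a⟩ + ⟨b⟩ - ⟨a+b⟩ ≥ √2 - 1`.
-/

lemma jb_eq_norm (k : ℝ) : jb k = ‖(1 + k * I : ℂ)‖ := by
  simp [jb, Complex.norm_eq_sqrt_sq_add_sq]

lemma jb_add_le (a b : ℝ) : jb (a + b) ≤ |a| + jb b := by
  have h := norm_sub_norm_le (1 + (a + b : ℝ) * I : ℂ) (1 + b * I)
  rw [← jb_eq_norm, ← jb_eq_norm, show (1 + (a + b : ℝ) * I : ℂ) - (1 + b * I) = a * I by
    push_cast; ring] at h
  simpa using h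

lemma sqrt_two_sub_one_add_abs_le_jb {a : ℝ} (ha : |a| ≤ 1) : √2 - 1 + |a| ≤ jb a := by
  have hsq : √2 ^ 2 = 2 := Real.sq_sqrt zero_le_two
  have hpos : 0 ≤ √2 - 1 + |a| := by linarith [one_lt_sqrt_two, abs_nonneg a]
  rw [jb, ← Real.sqrt_sq hpos]
  gcongr
  nlinarith [one_lt_sqrt_two, abs_nonneg a, sq_abs a]

lemma sqrt_two_sub_one_le_jb_add_jb_sub_jb_add {a : ℝ} (ha : |a| ≤ 1) (b : ℝ) :
    √2 - 1 ≤ jb a + jb b - jb (a + b) := by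
  linarith [jb_add_le a b, sqrt_two_sub_one_add_abs_le_jb ha]

lemma phase_re (d k l : ℝ) : (phase d k l).re = 2 * d * ((k - l) * l) := by
  simp only [phase, lamHat, Complex.add_re, Complex.neg_re, Complex.sub_re, Complex.mul_re,
    Complex.ofReal_re, Complex.ofReal_im, Complex.I_re, Complex.I_im]
  ring

lemma phase_im (d k l : ℝ) : (phase d k l).im = jb k - jb (k - l) - jb l := by
  simp only [phase, lamHat, Complex.add_im, Complex.neg_im, Complex.sub_im, Complex.mul_im,
    Complex.ofReal_re, Complex.ofReal_im, Complex.I_re, Complex.I_im]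
  ring

lemma two_mul_le_norm_phase (d k l : ℝ) (hd : 0 ≤ d) (hkl : 1 ≤ |k - l|) (hl : 1 ≤ |l|) :
    2 * d ≤ ‖phase d k l‖ := by
  have hprod : 1 ≤ |k - l| * |l| := one_le_mul_of_one_le_of_one_le hkl hl
  calc 2 * d ≤ 2 * d * (|k - l| * |l|) := le_mul_of_one_le_right (by positivity) hprod
    _ = |(phase d k l).re| := by
      rw [phase_re, abs_mul (2 * d), abs_of_nonneg (by positivity : (0 : ℝ) ≤ 2 * d), abs_mul]
    _ ≤ ‖phase d k l‖ := Complex.abs_re_le_norm _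

lemma sqrt_two_sub_one_le_norm_phase (d k l : ℝ) (h : |k - l| ≤ 1 ∨ |l| ≤ 1) :
    √2 - 1 ≤ ‖phase d k l‖ := by
  have hgap : √2 - 1 ≤ jb (k - l) + jb l - jb k := by
    rcases h with h | h
    · simpa using sqrt_two_sub_one_le_jb_add_jb_sub_jb_add h l
    · simpa [add_comm] using sqrt_two_sub_one_le_jb_add_jb_sub_jb_add h (k - l)
  calc √2 - 1 ≤ -(phase d k l).im := by rw [phase_im]; linarith
    _ ≤ |(phase d k l).im| := neg_le_abs _
    _ ≤ ‖phase d k l‖ := Complex.abs_im_le_norm _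

/-- First assertion of Proposition A.1: the phase function is uniformly bounded away
from zero on `ℝ²`. -/
theorem phase_uniformly_bounded_away_from_zero (d : ℝ) (hd : 0 < d) :
    ∃ φ₀ : ℝ, 0 < φ₀ ∧ ∀ k l : ℝ, φ₀ ≤ ‖phase d k l‖ := by
  refine ⟨min (2 * d) (√2 - 1), lt_min (by positivity) (by linarith [one_lt_sqrt_two]), ?_⟩
  intro k l
  by_cases h : |k - l| ≤ 1 ∨ |l| ≤ 1
  · exact (min_le_right _ _).trans (sqrt_two_sub_one_le_norm_phase d k l h)
  · push Not at h
    exact (min_le_left _ _).trans (two_mul_le_norm_phase d k l hd.le h.1.le h.2.le)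
end

section
/- There exists a constant φ₀ > 0 such that |φ(k,l) + φ(l,m)| ≥ φ₀ for all (k,l,m) ∈ ℝ³. (Second assertion of Proposition A.1.) -/
open Real Complex

/-! Write `a = k - l`, `b = l - m`, `c = m`, so that `k = a + b + c`. Then
`φ(k,l) + φ(l,m)` has real part `2d(ab + bc + ca)` and imaginary part
`-(⟨a⟩ + ⟨b⟩ + ⟨c⟩ - ⟨a + b + c⟩)`. Since `⟨x + y⟩ ≤ ⟨x⟩ + |y|`, this bracket defect is at
least `⟨x⟩ - |x|` for each `x ∈ {a, b, c}`, which is `≥ 1/3` when `|x| ≤ 1`, and at least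
`|x| + |y| - |x + y|` for each pair, which is `≥ 2` when `x, y` have opposite signs and
modulus `> 1`. In the remaining case `a, b, c` have one sign and modulus `> 1`, so
`ab + bc + ca > 3`. -/

lemma jb_sq (x : ℝ) : jb x ^ 2 = 1 + x ^ 2 :=
  Real.sq_sqrt (by positivity)

lemma abs_le_jb (x : ℝ) : |x| ≤ jb x :=
  Real.abs_le_sqrt (by linarith)

lemma jb_add_le_s1 (x y : ℝ) : jb (x + y) ≤ jb x + |y| := by
  refine Real.sqrt_le_iff.mpr ⟨add_nonneg (Real.sqrt_nonneg _) (abs_nonneg y), ?_⟩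
  have hxy : x * y ≤ jb x * |y| :=
    calc x * y ≤ |x| * |y| := by rw [← abs_mul]; exact le_abs_self _
      _ ≤ jb x * |y| := mul_le_mul_of_nonneg_right (abs_le_jb x) (abs_nonneg y)
  nlinarith [jb_sq x, sq_abs y]

lemma one_third_le_jb_sub_abs {x : ℝ} (hx : |x| ≤ 1) : 1 / 3 ≤ jb x - |x| := by
  have hjb : jb x ≤ 2 := Real.sqrt_le_iff.mpr ⟨by norm_num, by nlinarith [sq_abs x, abs_nonneg x]⟩
  -- `(⟨x⟩ - |x|)(⟨x⟩ + |x|) = 1` and `⟨x⟩ + |x| ≤ 3`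
  nlinarith [jb_sq x, sq_abs x, abs_le_jb x]

noncomputable def jbDefect (a b c : ℝ) : ℝ := jb a + jb b + jb c - jb (a + b + c)

lemma jbDefect_rotate (a b c : ℝ) : jbDefect a b c = jbDefect b c a := by
  rw [jbDefect, jbDefect, add_rotate a b c]
  ring

lemma jb_sub_abs_le_jbDefect (a b c : ℝ) : jb a - |a| ≤ jbDefect a b c := by
  have h₁ : jb (a + b + c) ≤ jb (b + c) + |a| := by
    rw [add_assoc, add_comm]; exact jb_add_le_s1 _ _
  have h₂ := jb_add_le_s1 b c
  have h₃ := abs_le_jb c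
  rw [jbDefect]; linarith

lemma abs_add_abs_sub_abs_add_le_jbDefect (a b c : ℝ) :
    |a| + |b| - |a + b| ≤ jbDefect a b c := by
  have h := jb_add_le_s1 c (a + b)
  rw [add_comm c] at h
  have ha := abs_le_jb a
  have hb := abs_le_jb b
  rw [jbDefect]; linarith

lemma abs_add_le_of_mul_neg {x y : ℝ} (hx : 1 < |x|) (hy : 1 < |y|) (hxy : x * y < 0) :
    |x + y| ≤ |x| + |y| - 2 := by
  rcases mul_neg_iff.mp hxy with ⟨hx0, hy0⟩ | ⟨hx0, hy0⟩
  · rw [abs_of_pos hx0] at hx ⊢; rw [abs_of_neg hy0] at hy ⊢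
    rw [abs_le]; constructor <;> linarith
  · rw [abs_of_neg hx0] at hx ⊢; rw [abs_of_pos hy0] at hy ⊢
    rw [abs_le]; constructor <;> linarith

lemma one_lt_mul_of_one_lt_abs {x y : ℝ} (hx : 1 < |x|) (hy : 1 < |y|) (hxy : 0 ≤ x * y) :
    1 < x * y := by
  rw [← abs_of_nonneg hxy, abs_mul]
  nlinarith [mul_pos (sub_pos.mpr hx) (sub_pos.mpr hy)]

lemma one_third_le_jbDefect_or_three_le (a b c : ℝ) :
    1 / 3 ≤ jbDefect a b c ∨ 3 ≤ a * b + b * c + c * a := by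
  have hrot₁ := jbDefect_rotate a b c
  have hrot₂ := jbDefect_rotate b c a
  by_cases hsmall : |a| ≤ 1 ∨ |b| ≤ 1 ∨ |c| ≤ 1
  · left
    rcases hsmall with h | h | h
    · exact (one_third_le_jb_sub_abs h).trans (jb_sub_abs_le_jbDefect a b c)
    · exact hrot₁ ▸ (one_third_le_jb_sub_abs h).trans (jb_sub_abs_le_jbDefect b c a)
    · exact hrot₁ ▸ hrot₂ ▸ (one_third_le_jb_sub_abs h).trans (jb_sub_abs_le_jbDefect c a b)
  push Not at hsmall
  obtain ⟨ha, hb, hc⟩ := hsmall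
  by_cases hopp : a * b < 0 ∨ b * c < 0 ∨ c * a < 0
  · left
    rcases hopp with h | h | h
    · linarith [abs_add_le_of_mul_neg ha hb h, abs_add_abs_sub_abs_add_le_jbDefect a b c]
    · linarith [abs_add_le_of_mul_neg hb hc h, abs_add_abs_sub_abs_add_le_jbDefect b c a]
    · linarith [abs_add_le_of_mul_neg hc ha h, abs_add_abs_sub_abs_add_le_jbDefect c a b]
  push Not at hopp
  obtain ⟨hab, hbc, hca⟩ := hopp
  right
  linarith [one_lt_mul_of_one_lt_abs ha hb hab, one_lt_mul_of_one_lt_abs hb hc hbc,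
    one_lt_mul_of_one_lt_abs hc ha hca]

section

variable (d k l m : ℝ)

lemma re_phase_add_phase :
    (phase d k l + phase d l m).re =
      2 * d * ((k - l) * (l - m) + (l - m) * m + m * (k - l)) := by
  simp only [phase, lamHat, Complex.add_re, Complex.neg_re, Complex.sub_re, Complex.mul_re,
    Complex.ofReal_re, Complex.ofReal_im, Complex.I_re, Complex.I_im]
  ring

lemma im_phase_add_phase :
    (phase d k l + phase d l m).im = -jbDefect (k - l) (l - m) m := by
  simp only [phase, lamHat, jbDefect, Complex.add_im, Complex.neg_im, Complex.sub_im,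
    Complex.mul_im, Complex.ofReal_re, Complex.ofReal_im, Complex.I_re, Complex.I_im,
    sub_add_sub_cancel, sub_add_cancel]
  ring

end

/-- Second assertion of Proposition A.1: `(k,l,m) ↦ φ(k,l) + φ(l,m)` is uniformly
bounded away from zero on `ℝ³`. -/
theorem phase_sum_uniformly_bounded_away_from_zero (d : ℝ) (hd : 0 < d) :
    ∃ φ₀ : ℝ, 0 < φ₀ ∧ ∀ k l m : ℝ, φ₀ ≤ ‖phase d k l + phase d l m‖ := by
  refine ⟨min (1 / 3) (6 * d), by positivity, fun k l m => ?_⟩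
  rcases one_third_le_jbDefect_or_three_le (k - l) (l - m) m with h | h
  · calc min (1 / 3) (6 * d) ≤ jbDefect (k - l) (l - m) m := (min_le_left _ _).trans h
      _ = -(phase d k l + phase d l m).im := by rw [im_phase_add_phase, neg_neg]
      _ ≤ ‖phase d k l + phase d l m‖ := (neg_le_abs _).trans (Complex.abs_im_le_norm _)
  · calc min (1 / 3) (6 * d) ≤ 2 * d * 3 := by linarith [min_le_right (1 / 3) (6 * d)]
      _ ≤ (phase d k l + phase d l m).re := by
        rw [re_phase_add_phase]; exact mul_le_mul_of_nonneg_left h (by positivity)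
      _ ≤ ‖phase d k l + phase d l m‖ := Complex.re_le_norm _
end

section
/- For every k ∈ ℝ and every l ∈ ℝ with |l| ≤ 1/2 one has ⟨k⟩ − ⟨k−l⟩ − ⟨l⟩ ≤ √(1/4 + l²) − √(1 + l²); in particular there exists δ > 0 such that ⟨k⟩ − ⟨k−l⟩ − ⟨l⟩ ≤ −δ whenever |l| ≤ 1/2 (and, by the symmetry l ↦ k−l, also whenever |k−l| ≤ 1/2). -/
open Real

lemma jb_lip (a b : ℝ) : jb a - jb b ≤ |a - b| := by
  have hb : |b| ≤ Real.sqrt (1 + b ^ 2) := by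
    rw [← Real.sqrt_sq_eq_abs]
    exact Real.sqrt_le_sqrt (by nlinarith)
  have h2 : b * (a - b) ≤ |b| * |a - b| :=
    (le_abs_self _).trans (abs_mul b (a - b)).le
  have h3 : |b| * |a - b| ≤ Real.sqrt (1 + b ^ 2) * |a - b| :=
    mul_le_mul_of_nonneg_right hb (abs_nonneg _)
  have hs := Real.sq_sqrt (show (0:ℝ) ≤ 1 + b ^ 2 by positivity)
  have hkey : (1 + a ^ 2) ≤ (Real.sqrt (1 + b ^ 2) + |a - b|) ^ 2 := by
    have hsq : |a - b| ^ 2 = (a - b) ^ 2 := sq_abs _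
    nlinarith [Real.sqrt_nonneg (1 + b ^ 2), abs_nonneg (a - b)]
  have : jb a ≤ Real.sqrt (1 + b ^ 2) + |a - b| := by
    rw [jb, ← Real.sqrt_sq (by positivity : (0:ℝ) ≤ Real.sqrt (1 + b ^ 2) + |a - b|)]
    exact Real.sqrt_le_sqrt hkey
  simp only [jb] at this ⊢; linarith

lemma main_ineq (k l : ℝ) :
    jb k - jb (k - l) - jb l ≤ Real.sqrt (1 / 4 + l ^ 2) - Real.sqrt (1 + l ^ 2) := by
  have h1 : jb k - jb (k - l) ≤ |l| := by simpa using jb_lip k (k - l)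
  have h2 : |l| ≤ Real.sqrt (1 / 4 + l ^ 2) := by
    rw [← Real.sqrt_sq_eq_abs]
    exact Real.sqrt_le_sqrt (by nlinarith)
  have : jb l = Real.sqrt (1 + l ^ 2) := rfl
  linarith

/-- If `|l| ≤ 1/2`, then `⟨k⟩ - ⟨k-l⟩ - ⟨l⟩ ≤ √(1/4+l²) - √(1+l²)`; in particular there
is `δ > 0` such that `⟨k⟩ - ⟨k-l⟩ - ⟨l⟩ ≤ -δ` whenever `|l| ≤ 1/2` or (by symmetry)
`|k-l| ≤ 1/2`. -/
theorem phase_im_bound_small_frequency :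
    (∀ k l : ℝ, |l| ≤ 1 / 2 →
      jb k - jb (k - l) - jb l ≤ Real.sqrt (1 / 4 + l ^ 2) - Real.sqrt (1 + l ^ 2)) ∧
    ∃ δ : ℝ, 0 < δ ∧ ∀ k l : ℝ, (|l| ≤ 1 / 2 ∨ |k - l| ≤ 1 / 2) →
      jb k - jb (k - l) - jb l ≤ -δ := by
  have gap : ∀ l : ℝ, |l| ≤ 1 / 2 →
      Real.sqrt (1 / 4 + l ^ 2) - Real.sqrt (1 + l ^ 2) ≤ -(2/5 : ℝ) := by
    intro l hl
    have hl2 : l ^ 2 ≤ 1 / 4 := by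
      have := abs_nonneg l
      nlinarith [sq_abs l]
    have hA : Real.sqrt (1 + l ^ 2) ≤ 91 / 80 := by
      rw [← Real.sqrt_sq (by norm_num : (0:ℝ) ≤ 91/80)]
      exact Real.sqrt_le_sqrt (by nlinarith)
    have hs := Real.sq_sqrt (show (0:ℝ) ≤ 1 + l ^ 2 by positivity)
    have h1 : (1:ℝ) ≤ Real.sqrt (1 + l ^ 2) := by
      nlinarith [Real.sqrt_nonneg (1 + l ^ 2)]
    have hB : Real.sqrt (1 / 4 + l ^ 2) ≤ Real.sqrt (1 + l ^ 2) - 2/5 := by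
      rw [← Real.sqrt_sq (by linarith : (0:ℝ) ≤ Real.sqrt (1 + l ^ 2) - 2/5)]
      exact Real.sqrt_le_sqrt (by nlinarith)
    linarith
  refine ⟨fun k l _ => main_ineq k l, 2/5, by norm_num, ?_⟩
  rintro k l (hl | hl)
  · exact (main_ineq k l).trans (gap l hl)
  · have := (main_ineq k (k - l)).trans (gap (k - l) hl)
    have e : k - (k - l) = l := by ring
    rw [e] at this
    linarith
end

section
/- Let 1 ≤ p ≤ ∞. There exists a constant C > 0 such that for all t ≥ 0 and every measurable f : ℝ → ℂ with f ∈ L^p(ℝ) ∩ L^∞(ℝ), the function k ↦ e^{t·λ̂(k)} f(k) satisfies ‖k ↦ e^{t·λ̂(k)} f(k)‖_{L^p(ℝ)} ≤ C (1+t)^{−1/(2p)} (‖f‖_{L^p} + ‖f‖_{L^∞}), where the exponent 1/(2p) is interpreted as 0 when p = ∞. (Lemma 2.2.) -/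
/-!
Since `|e^{tλ̂(k)}| = e^{-t d k²} ≤ 1`, multiplication by `e^{tλ̂}` is a contraction on every
`L^p`; this gives the bound for `t ≤ 1`, and for `p = ∞`, where there is no decay to prove.
For `t > 1` and `p < ∞`, Hölder's inequality with exponents `(p, ∞)` bounds the norm by
`‖e^{-t d k²}‖_{L^p} ‖f‖_{L^∞}`, and the Gaussian integral gives
`‖e^{-t d k²}‖_{L^p} = (π / (p t d))^{1/(2p)} ≲ (1 + t)^{-1/(2p)}`.
-/

open Real Complex MeasureTheory ENNReal

lemma norm_exp_mul_lamHat (d t k : ℝ) :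
    ‖Complex.exp (t * lamHat d k)‖ = Real.exp (-(t * d) * k ^ 2) := by
  rw [Complex.norm_exp]
  congr 1
  simp [lamHat, Complex.mul_re, -Complex.ofReal_pow]
  ring

lemma eLpNorm_exp_mul_lamHat_mul_le {d t : ℝ} (hd : 0 ≤ d) (ht : 0 ≤ t) (f : ℝ → ℂ)
    (p : ℝ≥0∞) :
    eLpNorm (fun k => Complex.exp (t * lamHat d k) * f k) p volume ≤ eLpNorm f p volume := by
  refine eLpNorm_mono fun k => ?_
  rw [norm_mul, norm_exp_mul_lamHat]
  refine mul_le_of_le_one_left (norm_nonneg _) (Real.exp_le_one_iff.mpr ?_)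
  have : 0 ≤ t * d * k ^ 2 := by positivity
  linarith

lemma eLpNorm_exp_neg_mul_sq {b : ℝ} (hb : 0 < b) {p : ℝ≥0∞} (hp0 : p ≠ 0) (hptop : p ≠ ⊤) :
    eLpNorm (fun x : ℝ => Real.exp (-b * x ^ 2)) p volume
      = ENNReal.ofReal ((π / (p.toReal * b)) ^ (1 / (2 * p.toReal))) := by
  have hr : 0 < p.toReal := ENNReal.toReal_pos hp0 hptop
  have hpow : ∀ x : ℝ, ‖Real.exp (-b * x ^ 2)‖ₑ ^ p.toReal
      = ENNReal.ofReal (Real.exp (-(p.toReal * b) * x ^ 2)) := fun x => by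
    rw [Real.enorm_eq_ofReal (Real.exp_pos _).le,
      ENNReal.ofReal_rpow_of_nonneg (Real.exp_pos _).le hr.le, ← Real.exp_mul]
    ring_nf
  rw [eLpNorm_eq_lintegral_rpow_enorm_toReal hp0 hptop]
  simp_rw [hpow]
  rw [← ofReal_integral_eq_lintegral_ofReal (integrable_exp_neg_mul_sq (by positivity))
      (.of_forall fun x => (Real.exp_pos _).le), integral_gaussian,
    ENNReal.ofReal_rpow_of_nonneg (Real.sqrt_nonneg _) (by positivity), Real.sqrt_eq_rpow,
    ← Real.rpow_mul (by positivity)]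
  congr 2
  ring

lemma eLpNorm_exp_mul_lamHat_mul_le_mul_eLpNorm_top {d t : ℝ} (hd : 0 < d) (ht : 0 < t)
    (f : ℝ → ℂ) {p : ℝ≥0∞} (hp0 : p ≠ 0) (hptop : p ≠ ⊤) :
    eLpNorm (fun k => Complex.exp (t * lamHat d k) * f k) p volume
      ≤ ENNReal.ofReal ((π / (p.toReal * (t * d))) ^ (1 / (2 * p.toReal)))
        * eLpNorm f ⊤ volume := by
  have hφ : Continuous fun k => Complex.exp (t * lamHat d k) := by
    unfold lamHat jb; fun_prop
  calc eLpNorm (fun k => Complex.exp (t * lamHat d k) * f k) p volume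
      ≤ eLpNorm (fun k => Complex.exp (t * lamHat d k)) p volume * eLpNorm f ⊤ volume :=
        eLpNorm_smul_le_eLpNorm_mul_eLpNorm_top (φ := fun k => Complex.exp (t * lamHat d k)) p f
          hφ.aestronglyMeasurable
    _ = eLpNorm (fun k => Real.exp (-(t * d) * k ^ 2)) p volume * eLpNorm f ⊤ volume := by
      congr 1
      refine eLpNorm_congr_norm_ae (.of_forall fun k => ?_)
      rw [norm_exp_mul_lamHat, Real.norm_of_nonneg (Real.exp_pos _).le]
    _ = _ := by rw [eLpNorm_exp_neg_mul_sq (mul_pos ht hd) hp0 hptop]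

lemma one_le_mul_one_add_rpow_neg {C a t : ℝ} (hC : 2 ≤ C) (ha0 : 0 ≤ a) (ha1 : a ≤ 1)
    (ht : 0 ≤ t) (hat : a * t ≤ 1) : 1 ≤ C * (1 + t) ^ (-a) := by
  rw [Real.rpow_neg (by positivity), ← div_eq_mul_inv, one_le_div (by positivity)]
  linarith [rpow_one_add_le_one_add_mul_self (by linarith : -1 ≤ t) ha0 ha1]

lemma pi_div_rpow_le {d r t : ℝ} (hd : 0 < d) (hr : 1 ≤ r) (ht : 1 ≤ t) :
    (π / (r * (t * d))) ^ (1 / (2 * r))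
      ≤ 2 * (1 + π / d) * (1 + t) ^ (-(1 / (2 * r))) := by
  set a := 1 / (2 * r)
  have ha0 : 0 ≤ a := by positivity
  have ha1 : a ≤ 1 := by rw [div_le_one (by positivity)]; linarith
  set y := π * (1 + t) / (r * (t * d)) with hy_def
  have hy0 : 0 ≤ y := by positivity
  have hy : y ≤ 2 * π / d := by
    rw [div_le_div_iff₀ (by positivity) hd]
    calc π * (1 + t) * d ≤ π * (2 * t) * d := by gcongr; linarith
      _ = 2 * π * (1 * (t * d)) := by ring
      _ ≤ 2 * π * (r * (t * d)) := by gcongr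
  have hya : y ^ a ≤ 2 * (1 + π / d) :=
    calc y ^ a = (1 + (y - 1)) ^ a := by rw [add_sub_cancel]
      _ ≤ 1 + a * (y - 1) := rpow_one_add_le_one_add_mul_self (by linarith) ha0 ha1
      _ ≤ 1 + y := by nlinarith
      _ ≤ 2 * (1 + π / d) := by
        rw [mul_div_assoc] at hy
        linarith [div_nonneg Real.pi_pos.le hd.le]
  calc (π / (r * (t * d))) ^ a = (y / (1 + t)) ^ a := by
        rw [hy_def]; field_simp
    _ = y ^ a * (1 + t) ^ (-a) := by
        rw [Real.div_rpow hy0 (by positivity), Real.rpow_neg (by positivity), div_eq_mul_inv]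
    _ ≤ 2 * (1 + π / d) * (1 + t) ^ (-a) := by gcongr

lemma one_div_two_mul_toReal_le_one {p : ℝ≥0∞} (hp : 1 ≤ p) : 1 / (2 * p.toReal) ≤ 1 := by
  rcases eq_or_ne p ⊤ with rfl | hptop
  · simp
  have hr : 1 ≤ p.toReal := by simpa using ENNReal.toReal_mono hptop hp
  rw [div_le_one (by positivity)]
  linarith

/-- Lemma 2.2: for `1 ≤ p ≤ ∞` there is `C > 0` such that for all `t ≥ 0` and all
`f ∈ L^p(ℝ) ∩ L^∞(ℝ)`,
`‖k ↦ e^{tλ̂(k)} f(k)‖_{L^p} ≤ C (1+t)^{-1/(2p)} (‖f‖_{L^p} + ‖f‖_{L^∞})`,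
where `1/(2p)` is interpreted as `0` for `p = ∞`. -/
theorem linear_semigroup_bound (d : ℝ) (hd : 0 < d) (p : ℝ≥0∞) (hp : 1 ≤ p) :
    ∃ C : ℝ, 0 < C ∧ ∀ t : ℝ, 0 ≤ t → ∀ f : ℝ → ℂ, Measurable f →
      MemLp f p (volume : Measure ℝ) → MemLp f ⊤ (volume : Measure ℝ) →
      eLpNorm (fun k => Complex.exp (t * lamHat d k) * f k) p (volume : Measure ℝ) ≤
        ENNReal.ofReal (C * (1 + t) ^ (-(1 / (2 * p.toReal)))) *
          (eLpNorm f p (volume : Measure ℝ) + eLpNorm f ⊤ (volume : Measure ℝ)) := by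
  have hC : 2 ≤ 2 * (1 + π / d) := by linarith [div_nonneg Real.pi_pos.le hd.le]
  refine ⟨2 * (1 + π / d), by linarith, fun t ht f _ _ _ => ?_⟩
  have ha1 := one_div_two_mul_toReal_le_one hp
  by_cases hsmall : p = ⊤ ∨ t ≤ 1
  · have hat : 1 / (2 * p.toReal) * t ≤ 1 := by
      rcases hsmall with rfl | ht1
      · simp
      · nlinarith
    calc eLpNorm (fun k => Complex.exp (t * lamHat d k) * f k) p volume
        ≤ eLpNorm f p volume := eLpNorm_exp_mul_lamHat_mul_le hd.le ht f p
      _ ≤ _ := le_mul_of_one_le_of_le (ENNReal.one_le_ofReal.mpr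
          (one_le_mul_one_add_rpow_neg hC (by positivity) ha1 ht hat)) le_self_add
  rw [not_or, not_le] at hsmall
  obtain ⟨hptop, ht1⟩ := hsmall
  have hr : 1 ≤ p.toReal := by simpa using ENNReal.toReal_mono hptop hp
  calc eLpNorm (fun k => Complex.exp (t * lamHat d k) * f k) p volume
      ≤ ENNReal.ofReal ((π / (p.toReal * (t * d))) ^ (1 / (2 * p.toReal)))
          * eLpNorm f ⊤ volume :=
        eLpNorm_exp_mul_lamHat_mul_le_mul_eLpNorm_top hd (by linarith) f (by positivity) hptop
    _ ≤ _ := by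
        gcongr
        · exact pi_div_rpow_le hd hr ht1.le
        · exact le_add_self
end

section
/- Let a ∈ [0, 1/2]. There exists a constant C > 0 such that for all t ≥ 0 one has ∫₀ᵗ (1 + t − s)^{−a} (1 + s)^{−3/2} ds ≤ C (1 + t)^{−a}. -/
open Real MeasureTheory

/-!
Split `[0, t]` at `t / 2`. Where `s ≤ t / 2` the first factor is at most `2 ^ a (1 + t) ^ (-a)`
and the integrable factor `(1 + s) ^ (-b)` contributes a bounded integral; where `s ≥ t / 2` the
second factor is at most `2 ^ b (1 + t) ^ (-b)` and the first is at most `1`, so this part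
contributes at most `t (1 + t) ^ (-b) ≤ (1 + t) ^ (1 - b)`, which is `≤ (1 + t) ^ (-a)` as long as
`a + 1 ≤ b`. For `b = 3 / 2` this is exactly `a ≤ 1 / 2`.
-/

lemma rpow_neg_le_two_rpow_mul_of_half_le {a x y : ℝ} (ha : 0 ≤ a) (hy : 0 < y)
    (hyx : y / 2 ≤ x) : x ^ (-a) ≤ 2 ^ a * y ^ (-a) :=
  calc x ^ (-a) ≤ (y / 2) ^ (-a) := rpow_le_rpow_of_nonpos (by positivity) hyx (by linarith)
    _ = 2 ^ a * y ^ (-a) := by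
      rw [div_rpow hy.le zero_le_two, rpow_neg zero_le_two, div_inv_eq_mul, mul_comm]

lemma one_add_sub_rpow_mul_one_add_rpow_le {a b t s : ℝ} (ha : 0 ≤ a) (hb : 0 ≤ b)
    (hs : s ∈ Set.Icc 0 t) :
    (1 + t - s) ^ (-a) * (1 + s) ^ (-b) ≤
      2 ^ a * (1 + t) ^ (-a) * (1 + s) ^ (-b) + 2 ^ b * (1 + t) ^ (-b) := by
  obtain ⟨hs0, hst⟩ := hs
  have h1t : 0 < 1 + t := by linarith
  rcases le_total s (t / 2) with hle | hle
  · have hfirst := rpow_neg_le_two_rpow_mul_of_half_le ha h1t (x := 1 + t - s) (by linarith)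
    calc (1 + t - s) ^ (-a) * (1 + s) ^ (-b) ≤ 2 ^ a * (1 + t) ^ (-a) * (1 + s) ^ (-b) :=
          mul_le_mul_of_nonneg_right hfirst (by positivity)
      _ ≤ _ := le_add_of_nonneg_right (by positivity)
  · have hfirst : (1 + t - s) ^ (-a) ≤ 1 := rpow_le_one_of_one_le_of_nonpos (by linarith) (by linarith)
    have hsecond := rpow_neg_le_two_rpow_mul_of_half_le hb h1t (x := 1 + s) (by linarith)
    calc (1 + t - s) ^ (-a) * (1 + s) ^ (-b) ≤ 1 * (2 ^ b * (1 + t) ^ (-b)) :=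
          mul_le_mul hfirst hsecond (by positivity) zero_le_one
      _ ≤ _ := by rw [one_mul]; exact le_add_of_nonneg_left (by positivity)

lemma integral_one_add_rpow_neg_le {b t : ℝ} (hb : 1 < b) (ht : 0 ≤ t) :
    ∫ s in (0:ℝ)..t, (1 + s) ^ (-b) ≤ (b - 1)⁻¹ := by
  have h0 : (0:ℝ) ∉ Set.uIcc (1 + 0) (1 + t) := by
    rw [Set.uIcc_of_le (by linarith)]; exact fun h => by linarith [h.1]
  rw [intervalIntegral.integral_comp_add_left (fun x => x ^ (-b)),
    integral_rpow (Or.inr ⟨by linarith, h0⟩), add_zero, one_rpow]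
  have hpow : 0 ≤ (1 + t) ^ (-b + 1) := by positivity
  rw [div_le_iff_of_neg (by linarith)]
  nlinarith [inv_mul_cancel₀ (show b - 1 ≠ 0 by linarith)]

lemma mul_one_add_rpow_neg_le {a b t : ℝ} (ht : 0 ≤ t) (hab : a + 1 ≤ b) :
    t * (1 + t) ^ (-b) ≤ (1 + t) ^ (-a) :=
  calc t * (1 + t) ^ (-b) ≤ (1 + t) ^ (-b) * (1 + t) := by
        rw [mul_comm]; exact mul_le_mul_of_nonneg_left (by linarith) (by positivity)
    _ = (1 + t) ^ (-b + 1) := (rpow_add_one (by linarith) _).symm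
    _ ≤ (1 + t) ^ (-a) := rpow_le_rpow_of_exponent_le (by linarith) (by linarith)

theorem integral_one_add_sub_rpow_mul_one_add_rpow_le {a b t : ℝ} (ha : 0 ≤ a) (hb : 1 < b)
    (hab : a + 1 ≤ b) (ht : 0 ≤ t) :
    ∫ s in (0:ℝ)..t, (1 + t - s) ^ (-a) * (1 + s) ^ (-b) ≤
      (2 ^ a * (b - 1)⁻¹ + 2 ^ b) * (1 + t) ^ (-a) := by
  have hIcc : Set.uIcc 0 t = Set.Icc 0 t := Set.uIcc_of_le ht
  have hcont_add : ContinuousOn (fun s : ℝ => (1 + s) ^ (-b)) (Set.uIcc 0 t) :=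
    (continuousOn_const.add continuousOn_id).rpow_const fun s hs => by
      rw [hIcc] at hs; exact Or.inl (by simp only [Pi.add_apply, id]; linarith [hs.1])
  have hcont_sub : ContinuousOn (fun s : ℝ => (1 + t - s) ^ (-a)) (Set.uIcc 0 t) :=
    (continuousOn_const.sub continuousOn_id).rpow_const fun s hs => by
      rw [hIcc] at hs; exact Or.inl (by simp only [Pi.sub_apply, id]; linarith [hs.2])
  have hint : IntervalIntegrable (fun s => (1 + s) ^ (-b)) volume 0 t := hcont_add.intervalIntegrable
  calc ∫ s in (0:ℝ)..t, (1 + t - s) ^ (-a) * (1 + s) ^ (-b)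
      ≤ ∫ s in (0:ℝ)..t, (2 ^ a * (1 + t) ^ (-a) * (1 + s) ^ (-b) + 2 ^ b * (1 + t) ^ (-b)) :=
        intervalIntegral.integral_mono_on ht (hcont_sub.mul hcont_add).intervalIntegrable
          ((hint.const_mul _).add intervalIntegrable_const) fun s hs =>
            one_add_sub_rpow_mul_one_add_rpow_le ha (by linarith) hs
    _ = 2 ^ a * (1 + t) ^ (-a) * (∫ s in (0:ℝ)..t, (1 + s) ^ (-b))
          + 2 ^ b * (t * (1 + t) ^ (-b)) := by
        rw [intervalIntegral.integral_add (hint.const_mul _) intervalIntegrable_const,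
          intervalIntegral.integral_const_mul, intervalIntegral.integral_const, smul_eq_mul]
        ring
    _ ≤ 2 ^ a * (1 + t) ^ (-a) * (b - 1)⁻¹ + 2 ^ b * (1 + t) ^ (-a) := by
        gcongr
        · exact integral_one_add_rpow_neg_le hb ht
        · exact mul_one_add_rpow_neg_le ht hab
    _ = (2 ^ a * (b - 1)⁻¹ + 2 ^ b) * (1 + t) ^ (-a) := by ring

/-- The convolution-in-time estimate: for `a ∈ [0, 1/2]` there is `C > 0` such that
`∫₀ᵗ (1+t-s)^{-a} (1+s)^{-3/2} ds ≤ C (1+t)^{-a}` for all `t ≥ 0`. -/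
theorem time_convolution_estimate (a : ℝ) (ha0 : 0 ≤ a) (ha : a ≤ 1 / 2) :
    ∃ C : ℝ, 0 < C ∧ ∀ t : ℝ, 0 ≤ t →
      ∫ s in (0:ℝ)..t, (1 + t - s) ^ (-a) * (1 + s) ^ (-(3 / 2 : ℝ)) ≤
        C * (1 + t) ^ (-a) := by
  refine ⟨2 ^ a * (3 / 2 - 1)⁻¹ + 2 ^ (3 / 2 : ℝ), by positivity, fun t ht => ?_⟩
  exact integral_one_add_sub_rpow_mul_one_add_rpow_le ha0 (by norm_num) (by linarith) ht
end
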